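/- Let G be a group that is a (possibly infinite) direct product of nontrivial groups G_i over an index set I, and suppose for each i there exist g_i, s_i ∈ G_i with s_i ≠ 1 and a positive integer k_i such that s_i = [s_i, ₖᵢ g_i] (and hence s_i = [s_i, ₖᵢₗ g_i] for all l ≥ 1). Let g = (g_i)_{i∈I}. Then every Engel sink of g in G has cardinality at least 2^{|I|}; in particular, if I is infinite then g has no countable Engel sink. -/
import Mathlib


/-- The left-normed iterated commutator `[x, ₙg]`: `engel g x 0 = x` and
`engel g x (n+1) = [engel g x n, g] = (engel g x n)⁻¹ * g⁻¹ * (engel g x n) * g`. -/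
def engel {G : Type*} [Group G] (g x : G) : ℕ → G
  | 0 => x
  | n + 1 => (engel g x n)⁻¹ * g⁻¹ * engel g x n * g

/-- `E` is an Engel sink of `g`: for every `x` all sufficiently long commutators
`[x, ₙg]` lie in `E`. -/
def IsEngelSink {G : Type*} [Group G] (g : G) (E : Set G) : Prop :=
  ∀ x : G, ∃ N : ℕ, ∀ n : ℕ, N ≤ n → engel g x n ∈ E

lemma engel_add {G : Type*} [Group G] (g x : G) (a b : ℕ) :
    engel g x (a + b) = engel g (engel g x a) b := by
  induction b with
  | zero => rfl
  | succ b ih => show engel g x (a + b + 1) = _; rw [engel, ih]; rfl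

lemma engel_one {G : Type*} [Group G] (g : G) (n : ℕ) : engel g 1 n = 1 := by
  induction n with
  | zero => rfl
  | succ n ih => rw [engel, ih]; group

lemma engel_mul_k {G : Type*} [Group G] {g s : G} {k : ℕ}
    (hfix : s = engel g s k) (m : ℕ) : engel g s (m * k) = s := by
  induction m with
  | zero => rw [Nat.zero_mul]; rfl
  | succ m ih =>
    have : (m + 1) * k = m * k + k := by ring
    rw [this, engel_add, ih, ← hfix]

lemma engel_ne_one {G : Type*} [Group G] {g s : G} {k : ℕ}
    (hs : s ≠ 1) (hk : 1 ≤ k) (hfix : s = engel g s k) (n : ℕ) :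
    engel g s n ≠ 1 := by
  intro h
  apply hs
  have hle : n ≤ n * k := Nat.le_mul_of_pos_right n hk
  have := engel_mul_k hfix n
  rw [show n * k = n + (n * k - n) by omega, engel_add, h, engel_one] at this
  exact this.symm

lemma engel_pi {I : Type*} {Gi : I → Type*} [∀ i, Group (Gi i)]
    (g x : ∀ i, Gi i) (n : ℕ) (i : I) :
    engel g x n i = engel (g i) (x i) n := by
  induction n with
  | zero => rfl
  | succ n ih => rw [engel, engel, ← ih]; rfl

/-- Let `G = ∏ i, Gi i` be a direct (Cartesian) product of nontrivial groups, and suppose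
for each `i` there are `g i, s i ∈ Gi i` with `s i ≠ 1` and `k i ≥ 1` such that
`s i = [s i, ₖᵢ (g i)]`.  Then every Engel sink of `g = (g i)` in `G` has cardinality at
least `2 ^ |I|`; in particular, if `I` is infinite then `g` has no countable Engel sink. -/
theorem engel_sink_of_product_large
    {I : Type u} {Gi : I → Type u} [∀ i, Group (Gi i)] [∀ i, Nontrivial (Gi i)]
    (g s : ∀ i, Gi i) (k : I → ℕ)
    (hs : ∀ i, s i ≠ 1) (hk : ∀ i, 1 ≤ k i)
    (hfix : ∀ i, s i = engel (g i) (s i) (k i)) :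
    (∀ E : Set (∀ i, Gi i), IsEngelSink g E → 2 ^ Cardinal.mk I ≤ Cardinal.mk E) ∧
      (Infinite I → ∀ E : Set (∀ i, Gi i), IsEngelSink g E → ¬ E.Countable) := by
  have main : ∀ E : Set (∀ i, Gi i), IsEngelSink g E →
      2 ^ Cardinal.mk I ≤ Cardinal.mk E := by
    intro E hE
    classical
    set xJ : Set I → (∀ i, Gi i) := fun J i => if i ∈ J then s i else 1 with hxJ
    choose N hN using fun J => hE (xJ J)
    set f : Set I → E := fun J => ⟨engel g (xJ J) (N J), hN J (N J) le_rfl⟩ with hf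
    have hinj : Function.Injective f := by
      intro J J' h
      have hmem : ∀ (J : Set I) (i : I), i ∈ J ↔ engel g (xJ J) (N J) i ≠ 1 := by
        intro J i
        rw [engel_pi]
        constructor
        · intro hi
          simp only [hxJ, if_pos hi]
          exact engel_ne_one (hs i) (hk i) (hfix i) (N J)
        · intro hne
          by_contra hi
          simp only [hxJ, if_neg hi] at hne
          exact hne (engel_one _ _)
      ext i
      rw [hmem J i, hmem J' i]
      have : engel g (xJ J) (N J) = engel g (xJ J') (N J') := congrArg Subtype.val h
      rw [this]
    calc 2 ^ Cardinal.mk I = Cardinal.mk (Set I) := (Cardinal.mk_set).symm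
      _ ≤ Cardinal.mk E := Cardinal.mk_le_of_injective hinj
  refine ⟨main, fun hI E hE hcount => ?_⟩
  have h1 : 2 ^ Cardinal.mk I ≤ Cardinal.mk E := main E hE
  have h2 : (2 : Cardinal) ^ Cardinal.aleph0 ≤ 2 ^ Cardinal.mk I :=
    Cardinal.power_le_power_left (by norm_num) (Cardinal.aleph0_le_mk I)
  have h3 : Cardinal.aleph0 < Cardinal.mk E :=
    lt_of_lt_of_le (Cardinal.cantor _) (le_trans (by simpa using h2) h1)
  exact absurd (Set.Countable.le_aleph0 hcount) (not_le.mpr h3)
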